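/- Let 0 < γ < 1. Then for all x > 0, ∫_0^x e^{−γt} I_1(t) dt > (1/(1−γ)) · ( e^{−γx} I_0(x) − 1 ). -/

import Mathlib

open Real MeasureTheory

/-- Modified Bessel function of the first kind, `I_ν(x) = ∑_{k} (x/2)^{ν+2k} / (Γ(ν+k+1) k!)`. -/
noncomputable def besselI (ν x : ℝ) : ℝ :=
  ∑' k : ℕ, (x / 2) ^ (ν + 2 * (k : ℝ)) / (Real.Gamma (ν + (k : ℝ) + 1) * (Nat.factorial k : ℝ))

/-- Modified Bessel function of the second kind, `K_ν(x) = ∫_0^∞ e^{-x cosh t} cosh(ν t) dt`. -/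
noncomputable def besselK (ν x : ℝ) : ℝ :=
  ∫ t in Set.Ioi (0 : ℝ), Real.exp (-x * Real.cosh t) * Real.cosh (ν * t)

/-- Lower incomplete gamma function `γ(a, x) = ∫_0^x t^{a-1} e^{-t} dt`. -/
noncomputable def lowerIncGamma (a x : ℝ) : ℝ :=
  ∫ t in (0 : ℝ)..x, t ^ (a - 1) * Real.exp (-t)

/-!
With `F(u) = (1 - γ) ∫₀ᵘ e^{-γt} I₁(t) dt - e^{-γu} I₀(u)` and `I₀' = I₁` one gets
`F'(u) = γ e^{-γu} (I₀(u) - I₁(u))`, so `F(x) > F(0) = -1` as soon as `I₁ < I₀`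
everywhere. Writing
`c_k = (x/2)^k / k!`, the series are `I₀ = ∑ c_k²` and `I₁ = ∑ c_{k+1} c_k`, and AM-GM
`2 c_{k+1} c_k ≤ c_k² + c_{k+1}²` summed over `k` gives `2 I₁ ≤ 2 I₀ - 1`.
-/

open Nat

noncomputable def expTerm (k : ℕ) (y : ℝ) : ℝ := y ^ k / k !

lemma expTerm_nonneg {y : ℝ} (hy : 0 ≤ y) (k : ℕ) : 0 ≤ expTerm k y := by
  unfold expTerm; positivity

lemma abs_expTerm_le {y R : ℝ} (h : |y| ≤ R) (k : ℕ) : |expTerm k y| ≤ expTerm k R := by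
  rw [expTerm, expTerm, abs_div, abs_pow, Nat.abs_cast]
  exact div_le_div_of_nonneg_right (pow_le_pow_left₀ (abs_nonneg y) h k) (Nat.cast_nonneg _)

lemma hasDerivAt_expTerm_succ (k : ℕ) (y : ℝ) :
    HasDerivAt (expTerm (k + 1)) (expTerm k y) y := by
  refine ((hasDerivAt_pow (k + 1) y).div_const ((k + 1)! : ℝ)).congr_deriv ?_
  rw [expTerm, Nat.factorial_succ, Nat.cast_mul]
  field_simp
  push_cast
  ring

/-- The `k`-th term `(x/2)^{2k+n} / ((k+n)! k!)` of `I_n`, `n ∈ ℕ`, split as `c_{k+n} c_k`. -/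
noncomputable def besselITerm (n k : ℕ) (x : ℝ) : ℝ :=
  expTerm (k + n) (x / 2) * expTerm k (x / 2)

lemma abs_besselITerm_le {x R : ℝ} (h : |x| ≤ R) (n k : ℕ) :
    |besselITerm n k x| ≤ besselITerm n k R := by
  have h2 : |x / 2| ≤ R / 2 := by rw [abs_div, abs_two]; linarith
  rw [besselITerm, abs_mul]
  exact mul_le_mul (abs_expTerm_le h2 _) (abs_expTerm_le h2 _) (abs_nonneg _)
    (expTerm_nonneg ((abs_nonneg _).trans h2) _)

lemma summable_besselITerm (n : ℕ) (x : ℝ) : Summable (besselITerm n · x) := by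
  have hx : 0 ≤ |x| / 2 := by positivity
  refine .of_norm_bounded ((Real.summable_pow_div_factorial (|x| / 2)).mul_left (exp (|x| / 2)))
    fun k => (abs_besselITerm_le le_rfl n k).trans ?_
  exact mul_le_mul_of_nonneg_right (pow_div_factorial_le_exp (x := _) hx _)
    (expTerm_nonneg hx k)

lemma besselI_natCast (n : ℕ) (x : ℝ) : besselI n x = ∑' k, besselITerm n k x := by
  refine tsum_congr fun k => ?_
  rw [show (n : ℝ) + 2 * k = ((k + n + k : ℕ) : ℝ) by push_cast; ring, Real.rpow_natCast,
    show (n : ℝ) + k + 1 = ((k + n : ℕ) : ℝ) + 1 by push_cast; ring,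
    Real.Gamma_nat_eq_factorial, besselITerm, expTerm, expTerm, pow_add]
  ring

lemma besselI_zero_eq_tsum (x : ℝ) : besselI 0 x = ∑' k, besselITerm 0 k x :=
  mod_cast besselI_natCast 0 x

lemma besselI_one_eq_tsum (x : ℝ) : besselI 1 x = ∑' k, besselITerm 1 k x :=
  mod_cast besselI_natCast 1 x

lemma besselITerm_zero_zero (x : ℝ) : besselITerm 0 0 x = 1 := by
  simp [besselITerm, expTerm]

lemma besselI_zero_eq_one_add_tsum (x : ℝ) :
    besselI 0 x = 1 + ∑' k, besselITerm 0 (k + 1) x := by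
  rw [besselI_zero_eq_tsum, (summable_besselITerm 0 x).tsum_eq_zero_add, besselITerm_zero_zero]

lemma besselI_zero_zero : besselI 0 0 = 1 := by
  simp [besselI_zero_eq_one_add_tsum, besselITerm, expTerm]

lemma besselI_one_lt_besselI_zero (x : ℝ) : besselI 1 x < besselI 0 x := by
  have amgm (k : ℕ) : 2 * besselITerm 1 k x ≤ besselITerm 0 k x + besselITerm 0 (k + 1) x := by
    simp only [besselITerm, add_zero]
    nlinarith [sq_nonneg (expTerm (k + 1) (x / 2) - expTerm k (x / 2))]
  have hI₀ := summable_besselITerm 0 x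
  have hI₀_succ : Summable fun k => besselITerm 0 (k + 1) x :=
    hI₀.comp_injective (add_left_injective 1)
  have hsum := ((summable_besselITerm 1 x).mul_left 2).tsum_le_tsum amgm (hI₀.add hI₀_succ)
  rw [tsum_mul_left, hI₀.tsum_add hI₀_succ, ← besselI_one_eq_tsum, ← besselI_zero_eq_tsum]
    at hsum
  linarith [besselI_zero_eq_one_add_tsum x]

lemma hasDerivAt_besselITerm_zero_succ (k : ℕ) (y : ℝ) :
    HasDerivAt (besselITerm 0 (k + 1)) (besselITerm 1 k y) y := by
  have h := (hasDerivAt_expTerm_succ k (y / 2)).comp y ((hasDerivAt_id y).div_const 2)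
  refine (h.mul h).congr_deriv ?_
  simp only [besselITerm, Function.comp_apply, id]
  ring

lemma hasDerivAt_besselI_zero (x : ℝ) : HasDerivAt (besselI 0) (besselI 1 x) x := by
  set R := |x| + 1
  have hxR : x ∈ Metric.ball 0 R := by simp [R]
  have hderiv := hasDerivAt_tsum_of_isPreconnected (summable_besselITerm 1 R) Metric.isOpen_ball
    (convex_ball 0 R).isPreconnected (fun k y _ => hasDerivAt_besselITerm_zero_succ k y)
    (fun k y hy => abs_besselITerm_le (mem_ball_zero_iff.1 hy).le 1 k)
    (Metric.mem_ball_self (by positivity))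
    ((summable_besselITerm 0 0).comp_injective (add_left_injective 1)) hxR
  rw [funext besselI_zero_eq_one_add_tsum, besselI_one_eq_tsum]
  exact hderiv.const_add 1

lemma continuous_besselITerm (n k : ℕ) : Continuous (besselITerm n k) := by
  unfold besselITerm expTerm
  fun_prop

lemma continuous_besselI_one : Continuous (besselI 1) := by
  rw [funext besselI_one_eq_tsum, continuous_iff_continuousAt]
  intro x
  set R := |x| + 1
  refine (continuousOn_tsum (s := Metric.ball 0 R)
    (fun k => (continuous_besselITerm 1 k).continuousOn) (summable_besselITerm 1 R)
    fun k y hy => ?_).continuousAt (Metric.isOpen_ball.mem_nhds (x := x) ?_)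
  · exact abs_besselITerm_le (mem_ball_zero_iff.1 hy).le 1 k
  · simp [R]

theorem integral_exp_mul_gt_of_hasDerivAt {f g : ℝ → ℝ} (hf : ∀ y, HasDerivAt f (g y) y)
    (hg : Continuous g) (hgf : ∀ y, g y < f y) {γ : ℝ} (hγ0 : 0 < γ) {x : ℝ} (hx : 0 < x) :
    exp (-γ * x) * f x - f 0 < (1 - γ) * ∫ t in (0 : ℝ)..x, exp (-γ * t) * g t := by
  set F : ℝ → ℝ := fun u =>
    (1 - γ) * (∫ t in (0 : ℝ)..u, exp (-γ * t) * g t) - exp (-γ * u) * f u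
  have hcont : Continuous fun t => exp (-γ * t) * g t := by fun_prop
  have hF' (y : ℝ) : HasDerivAt F (γ * exp (-γ * y) * (f y - g y)) y := by
    have hint := intervalIntegral.integral_hasDerivAt_right (hcont.intervalIntegrable 0 y)
      (hcont.stronglyMeasurableAtFilter _ _) hcont.continuousAt
    have hexp := ((hasDerivAt_id y).const_mul (-γ)).exp
    refine ((hint.const_mul (1 - γ)).sub (hexp.mul (hf y))).congr_deriv ?_
    simp only [id]
    ring
  have hmono : StrictMono F := strictMono_of_deriv_pos fun y => by
    rw [(hF' y).deriv]
    have := sub_pos.2 (hgf y)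
    positivity
  have := hmono hx
  simp only [F, intervalIntegral.integral_same, mul_zero, exp_zero, one_mul] at this
  linarith

theorem stmt_19 (γ : ℝ) (hγ0 : 0 < γ) (hγ1 : γ < 1) (x : ℝ) (hx : 0 < x) :
    ∫ t in (0 : ℝ)..x, Real.exp (-γ * t) * besselI 1 t >
      (1 / (1 - γ)) * (Real.exp (-γ * x) * besselI 0 x - 1) := by
  have key := integral_exp_mul_gt_of_hasDerivAt hasDerivAt_besselI_zero continuous_besselI_one
    besselI_one_lt_besselI_zero hγ0 hx
  rw [besselI_zero_zero] at key
  rw [gt_iff_lt, one_div_mul_eq_div, div_lt_iff₀' (sub_pos.2 hγ1)]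
  exact key
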